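/- arXiv:1904.03408 — 5 statements merged into one kernel-verified Lean document; each statement's English description precedes it below -/
import Mathlib

section
/- Conversely, if a Riemannian product M × N of manifolds of dimensions p ≥ 2 and q ≥ 2 is conformally flat (vanishing Weyl tensor) and both factors have constant sectional curvature c_M and c_N, then c_M = −c_N. -/
/-! A vanishing Weyl tensor means `R = h ⊙ g` is a Kulkarni–Nomizu product with the metric, so the
sectional curvature of an orthonormal pair `X, Y` is `h(X, X) + h(Y, Y)` minus a constant.
For orthonormal `e₁, e₂` tangent to `M` and `f₁, f₂` tangent to `N` this gives
`K(e₁, e₂) + K(f₁, f₂) = K(e₁, f₁) + K(e₂, f₂)`, and in the product the left side is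
`c_M + c_N` while mixed planes are flat. -/

open RealInnerProductSpace Module

section Weyl

variable {E : Type*} [NormedAddCommGroup E] [InnerProductSpace ℝ E]
  {R Weyl : E → E → E → E → ℝ} {Ric : E → E → ℝ} {scal n : ℝ}

theorem curvature_eq_of_weyl_eq_zero
    (hWeyl : ∀ X Y Z W : E, Weyl X Y Z W = R X Y Z W
      - (Ric X W * ⟪Y, Z⟫ - Ric X Z * ⟪Y, W⟫ + Ric Y Z * ⟪X, W⟫ - Ric Y W * ⟪X, Z⟫) / (n - 2)
      + scal * (⟪X, W⟫ * ⟪Y, Z⟫ - ⟪X, Z⟫ * ⟪Y, W⟫) / ((n - 1) * (n - 2)))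
    {X Y : E} (hX : ‖X‖ = 1) (hY : ‖Y‖ = 1) (hXY : ⟪X, Y⟫ = 0) (hW0 : Weyl X Y Y X = 0) :
    R X Y Y X = (Ric X X + Ric Y Y) / (n - 2) - scal / ((n - 1) * (n - 2)) := by
  rw [hWeyl, real_inner_comm X Y, hXY, real_inner_self_eq_norm_sq, real_inner_self_eq_norm_sq,
    hX, hY] at hW0
  linear_combination hW0

theorem curvature_add_eq_of_weyl_eq_zero
    (hWeyl : ∀ X Y Z W : E, Weyl X Y Z W = R X Y Z W
      - (Ric X W * ⟪Y, Z⟫ - Ric X Z * ⟪Y, W⟫ + Ric Y Z * ⟪X, W⟫ - Ric Y W * ⟪X, Z⟫) / (n - 2)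
      + scal * (⟪X, W⟫ * ⟪Y, Z⟫ - ⟪X, Z⟫ * ⟪Y, W⟫) / ((n - 1) * (n - 2)))
    (hW0 : ∀ X Y Z W : E, Weyl X Y Z W = 0)
    {e f : Fin 2 → E} (he : Orthonormal ℝ e) (hf : Orthonormal ℝ f) (hef : ∀ i j, ⟪e i, f j⟫ = 0) :
    R (e 0) (e 1) (e 1) (e 0) + R (f 0) (f 1) (f 1) (f 0)
      = R (e 0) (f 0) (f 0) (e 0) + R (e 1) (f 1) (f 1) (e 1) := by
  have hsec {X Y : E} (hX : ‖X‖ = 1) (hY : ‖Y‖ = 1) (hXY : ⟪X, Y⟫ = 0) :=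
    curvature_eq_of_weyl_eq_zero hWeyl hX hY hXY (hW0 X Y Y X)
  have he01 : ⟪e 0, e 1⟫ = 0 := he.2 (by decide)
  have hf01 : ⟪f 0, f 1⟫ = 0 := hf.2 (by decide)
  rw [hsec (he.1 0) (he.1 1) he01, hsec (hf.1 0) (hf.1 1) hf01, hsec (he.1 0) (hf.1 0) (hef 0 0),
    hsec (he.1 1) (hf.1 1) (hef 1 1)]
  ring

end Weyl

namespace Submodule

variable {T : Type*} [NormedAddCommGroup T] [InnerProductSpace ℝ T]

theorem exists_orthonormal_fin_of_le_finrank (U : Submodule ℝ T) [FiniteDimensional ℝ U] {k : ℕ}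
    (hk : k ≤ finrank ℝ U) : ∃ v : Fin k → T, Orthonormal ℝ v ∧ ∀ i, v i ∈ U :=
  ⟨fun i => stdOrthonormalBasis ℝ U (Fin.castLE hk i),
    ((stdOrthonormalBasis ℝ U).orthonormal.comp _ (Fin.castLE_injective hk)).comp_linearIsometry
      U.subtypeₗᵢ,
    fun _ => coe_mem _⟩

variable (U : Submodule ℝ T) [U.HasOrthogonalProjection]

/-- The curvature tensor of the unit-curvature space form on `U`, pulled back along the orthogonal
projection onto `U`. -/
noncomputable def projectedCurvature (X Y Z W : T) : ℝ :=
  ⟪(U.orthogonalProjectionOnto X : T), (U.orthogonalProjectionOnto W : T)⟫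
      * ⟪(U.orthogonalProjectionOnto Y : T), (U.orthogonalProjectionOnto Z : T)⟫
    - ⟪(U.orthogonalProjectionOnto X : T), (U.orthogonalProjectionOnto Z : T)⟫
      * ⟪(U.orthogonalProjectionOnto Y : T), (U.orthogonalProjectionOnto W : T)⟫

variable {U}

theorem projectedCurvature_of_mem {X Y Z W : T} (hX : X ∈ U) (hY : Y ∈ U) (hZ : Z ∈ U)
    (hW : W ∈ U) :
    U.projectedCurvature X Y Z W = ⟪X, W⟫ * ⟪Y, Z⟫ - ⟪X, Z⟫ * ⟪Y, W⟫ := by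
  simp only [projectedCurvature, ← starProjection_apply, starProjection_eq_self_iff.mpr, *]

theorem projectedCurvature_orthonormal_pair {v : Fin 2 → T} (hv : Orthonormal ℝ v)
    (hvU : ∀ i, v i ∈ U) : U.projectedCurvature (v 0) (v 1) (v 1) (v 0) = 1 := by
  rw [projectedCurvature_of_mem (hvU 0) (hvU 1) (hvU 1) (hvU 0), real_inner_self_eq_norm_sq,
    real_inner_self_eq_norm_sq, hv.1, hv.1, hv.2 (by decide)]
  norm_num

theorem projectedCurvature_of_mem_orthogonal_left {X : T} (hX : X ∈ Uᗮ) (Y Z W : T) :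
    U.projectedCurvature X Y Z W = 0 := by
  simp [projectedCurvature, orthogonalProjectionOnto_apply_of_mem_orthogonal hX]

theorem projectedCurvature_of_mem_orthogonal_right (X : T) {Y : T} (hY : Y ∈ Uᗮ) (Z W : T) :
    U.projectedCurvature X Y Z W = 0 := by
  simp [projectedCurvature, orthogonalProjectionOnto_apply_of_mem_orthogonal hY]

end Submodule

theorem stmt6_general {T : Type*} [NormedAddCommGroup T] [InnerProductSpace ℝ T]
    [FiniteDimensional ℝ T]
    (T₁ : Submodule ℝ T) (T₂ : Submodule ℝ T) (hcompl : T₂ = T₁ᗮ)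
    (hdim1 : 2 ≤ finrank ℝ T₁) (hdim2 : 2 ≤ finrank ℝ T₂)
    (cM cN : ℝ)
    -- the curvature tensor of the Riemannian product (Gauss sum of the factors)
    (R : T → T → T → T → ℝ)
    (hR : ∀ X Y Z W : T, R X Y Z W =
      cM * (⟪((Submodule.orthogonalProjectionOnto T₁ X : T₁) : T), ((Submodule.orthogonalProjectionOnto T₁ W : T₁) : T)⟫
              * ⟪((Submodule.orthogonalProjectionOnto T₁ Y : T₁) : T), ((Submodule.orthogonalProjectionOnto T₁ Z : T₁) : T)⟫
            - ⟪((Submodule.orthogonalProjectionOnto T₁ X : T₁) : T), ((Submodule.orthogonalProjectionOnto T₁ Z : T₁) : T)⟫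
              * ⟪((Submodule.orthogonalProjectionOnto T₁ Y : T₁) : T), ((Submodule.orthogonalProjectionOnto T₁ W : T₁) : T)⟫)
      + cN * (⟪((Submodule.orthogonalProjectionOnto T₂ X : T₂) : T), ((Submodule.orthogonalProjectionOnto T₂ W : T₂) : T)⟫
              * ⟪((Submodule.orthogonalProjectionOnto T₂ Y : T₂) : T), ((Submodule.orthogonalProjectionOnto T₂ Z : T₂) : T)⟫
            - ⟪((Submodule.orthogonalProjectionOnto T₂ X : T₂) : T), ((Submodule.orthogonalProjectionOnto T₂ Z : T₂) : T)⟫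
              * ⟪((Submodule.orthogonalProjectionOnto T₂ Y : T₂) : T), ((Submodule.orthogonalProjectionOnto T₂ W : T₂) : T)⟫))
    -- the Ricci tensor, scalar curvature and Weyl tensor of R
    (Ric : T → T → ℝ)
    (scal : ℝ)
    (Weyl : T → T → T → T → ℝ)
    (hWeyl : ∀ X Y Z W : T, Weyl X Y Z W = R X Y Z W
      - (Ric X W * ⟪Y, Z⟫ - Ric X Z * ⟪Y, W⟫
          + Ric Y Z * ⟪X, W⟫ - Ric Y W * ⟪X, Z⟫) / ((finrank ℝ T : ℝ) - 2)
      + scal * (⟪X, W⟫ * ⟪Y, Z⟫ - ⟪X, Z⟫ * ⟪Y, W⟫)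
          / (((finrank ℝ T : ℝ) - 1) * ((finrank ℝ T : ℝ) - 2)))
    (hW0 : ∀ X Y Z W : T, Weyl X Y Z W = 0) :
    cM = -cN := by
  subst hcompl
  have hR' (X Y Z W : T) :
      R X Y Z W = cM * T₁.projectedCurvature X Y Z W + cN * T₁ᗮ.projectedCurvature X Y Z W :=
    hR X Y Z W
  obtain ⟨e, he, heT₁⟩ := T₁.exists_orthonormal_fin_of_le_finrank hdim1
  obtain ⟨f, hf, hfT₂⟩ := T₁ᗮ.exists_orthonormal_fin_of_le_finrank hdim2
  have heT₂ i : e i ∈ T₁ᗮᗮ := T₁.le_orthogonal_orthogonal (heT₁ i)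
  have hef i j : ⟪e i, f j⟫ = 0 := (Submodule.mem_orthogonal _ _).mp (hfT₂ j) _ (heT₁ i)
  have key := curvature_add_eq_of_weyl_eq_zero hWeyl hW0 he hf hef
  simp only [hR', Submodule.projectedCurvature_orthonormal_pair he heT₁,
    Submodule.projectedCurvature_orthonormal_pair hf hfT₂,
    Submodule.projectedCurvature_of_mem_orthogonal_left (heT₂ _),
    Submodule.projectedCurvature_of_mem_orthogonal_left (hfT₂ _),
    Submodule.projectedCurvature_of_mem_orthogonal_right _ (hfT₂ _)] at key
  linarith

/-- If a Riemannian product of manifolds of dimensions p ≥ 2 and q ≥ 2 of constant sectional curvatures c_M and c_N is conformally flat (vanishing Weyl tensor), then c_M = −c_N. (Pointwise formulation on the tangent space of the product.) -/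
theorem stmt6 {T : Type*} [NormedAddCommGroup T] [InnerProductSpace ℝ T]
    [FiniteDimensional ℝ T]
    (T₁ : Submodule ℝ T) (T₂ : Submodule ℝ T) (hcompl : T₂ = T₁ᗮ)
    (hdim1 : 2 ≤ finrank ℝ T₁) (hdim2 : 2 ≤ finrank ℝ T₂)
    (cM cN : ℝ)
    -- the curvature tensor of the Riemannian product (Gauss sum of the factors)
    (R : T → T → T → T → ℝ)
    (hR : ∀ X Y Z W : T, R X Y Z W =
      cM * (⟪((Submodule.orthogonalProjectionOnto T₁ X : T₁) : T), ((Submodule.orthogonalProjectionOnto T₁ W : T₁) : T)⟫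
              * ⟪((Submodule.orthogonalProjectionOnto T₁ Y : T₁) : T), ((Submodule.orthogonalProjectionOnto T₁ Z : T₁) : T)⟫
            - ⟪((Submodule.orthogonalProjectionOnto T₁ X : T₁) : T), ((Submodule.orthogonalProjectionOnto T₁ Z : T₁) : T)⟫
              * ⟪((Submodule.orthogonalProjectionOnto T₁ Y : T₁) : T), ((Submodule.orthogonalProjectionOnto T₁ W : T₁) : T)⟫)
      + cN * (⟪((Submodule.orthogonalProjectionOnto T₂ X : T₂) : T), ((Submodule.orthogonalProjectionOnto T₂ W : T₂) : T)⟫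
              * ⟪((Submodule.orthogonalProjectionOnto T₂ Y : T₂) : T), ((Submodule.orthogonalProjectionOnto T₂ Z : T₂) : T)⟫
            - ⟪((Submodule.orthogonalProjectionOnto T₂ X : T₂) : T), ((Submodule.orthogonalProjectionOnto T₂ Z : T₂) : T)⟫
              * ⟪((Submodule.orthogonalProjectionOnto T₂ Y : T₂) : T), ((Submodule.orthogonalProjectionOnto T₂ W : T₂) : T)⟫))
    -- the Ricci tensor, scalar curvature and Weyl tensor of R
    (Ric : T → T → ℝ)
    (hRic : ∀ X Y : T, Ric X Y =
      ∑ a, R (stdOrthonormalBasis ℝ T a) X Y (stdOrthonormalBasis ℝ T a))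
    (scal : ℝ)
    (hscal : scal = ∑ a, Ric (stdOrthonormalBasis ℝ T a) (stdOrthonormalBasis ℝ T a))
    (Weyl : T → T → T → T → ℝ)
    (hWeyl : ∀ X Y Z W : T, Weyl X Y Z W = R X Y Z W
      - (Ric X W * ⟪Y, Z⟫ - Ric X Z * ⟪Y, W⟫
          + Ric Y Z * ⟪X, W⟫ - Ric Y W * ⟪X, Z⟫) / ((finrank ℝ T : ℝ) - 2)
      + scal * (⟪X, W⟫ * ⟪Y, Z⟫ - ⟪X, Z⟫ * ⟪Y, W⟫)
          / (((finrank ℝ T : ℝ) - 1) * ((finrank ℝ T : ℝ) - 2)))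
    (hW0 : ∀ X Y Z W : T, Weyl X Y Z W = 0) :
    cM = -cN :=
  stmt6_general T₁ T₂ hcompl hdim1 hdim2 cM cN R hR Ric scal Weyl hWeyl hW0
end

section
/- Let n ≥ 4 and suppose a curvature tensor R on an n-dimensional inner product space T arises via the Gauss equation from α(X,Y) = Σᵢ⟨Xᵢ,Yᵢ⟩ηᵢ with k ≥ 3 pairwise distinct principal normals ηᵢ ∈ N and orthogonal decomposition T = E₁ ⊕ ⋯ ⊕ E_k. If R has vanishing Weyl tensor (pointwise conformal flatness condition), then at most one of the subspaces E_i has dimension larger than one. -/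
open RealInnerProductSpace Module

/-! For orthonormal `x ∈ E a`, `y ∈ E b` the Gauss equation gives `R(x,y,y,x) = ⟪η a, η b⟫`,
while a vanishing Weyl tensor forces `R(x,y,y,x) = ρ x + ρ y` on orthonormal pairs, with `ρ`
read off from the Ricci tensor and the scalar curvature. If `E i` and `E j` (`i ≠ j`) both
contain orthonormal pairs `x, x'` and `y, y'`, comparing the planes `xx'`, `yy'` with `xy`, `x'y'`
gives `‖η i‖² + ‖η j‖² = 2 ⟪η i, η j⟫`, i.e. `η i = η j`. -/

section

variable {T N ι : Type*} [NormedAddCommGroup T] [InnerProductSpace ℝ T]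
  [NormedAddCommGroup N] [InnerProductSpace ℝ N]

theorem Submodule.exists_orthonormal_pair_of_one_lt_finrank {K : Submodule ℝ T}
    (hK : 1 < finrank ℝ K) : ∃ x ∈ K, ∃ y ∈ K, ‖x‖ = 1 ∧ ‖y‖ = 1 ∧ ⟪x, y⟫ = 0 := by
  have : FiniteDimensional ℝ K := Module.finite_of_finrank_pos (by omega)
  let b := stdOrthonormalBasis ℝ K
  have h01 : (⟨0, by omega⟩ : Fin (finrank ℝ K)) ≠ ⟨1, hK⟩ := by simp
  exact ⟨_, (b ⟨0, by omega⟩).2, _, (b ⟨1, hK⟩).2, b.orthonormal.1 _, b.orthonormal.1 _,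
    b.orthonormal.2 h01⟩

section DiagonalForm

variable [Fintype ι] (E : ι → Submodule ℝ T) [∀ i, (E i).HasOrthogonalProjection] (η : ι → N)

noncomputable def diagonalForm (X Y : T) : N :=
  ∑ i, ⟪(E i).starProjection X, (E i).starProjection Y⟫ • η i

variable {E}

theorem diagonalForm_of_mem_left (hE : Pairwise fun i j => E i ⟂ E j) {a : ι} {x : T}
    (hx : x ∈ E a) (Y : T) : diagonalForm E η x Y = ⟪x, Y⟫ • η a := by
  have hxa : (E a).starProjection x = x := Submodule.starProjection_eq_self_iff.mpr hx
  rw [diagonalForm, Finset.sum_eq_single a]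
  · rw [← Submodule.inner_starProjection_left_eq_right, hxa, hxa]
  · intro l _ hla
    rw [(Submodule.starProjection_apply_eq_zero_iff _).mpr ((hE hla).symm.le hx), inner_zero_left,
      zero_smul]
  · simp

theorem inner_diagonalForm_sub_inner_diagonalForm (hE : Pairwise fun i j => E i ⟂ E j)
    {a b : ι} {x y : T} (hx : x ∈ E a) (hy : y ∈ E b) :
    ⟪diagonalForm E η x x, diagonalForm E η y y⟫ - ⟪diagonalForm E η x y, diagonalForm E η y x⟫
      = (⟪x, x⟫ * ⟪y, y⟫ - ⟪x, y⟫ * ⟪y, x⟫) * ⟪η a, η b⟫ := by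
  simp only [diagonalForm_of_mem_left η hE hx, diagonalForm_of_mem_left η hE hy,
    inner_smul_left, inner_smul_right, RCLike.conj_to_real]
  ring

end DiagonalForm

section Weyl

noncomputable def weylTensor (R : T → T → T → T → ℝ) (Ric : T → T → ℝ) (scal : ℝ)
    (X Y Z W : T) : ℝ :=
  R X Y Z W
    - (Ric X W * ⟪Y, Z⟫ - Ric X Z * ⟪Y, W⟫
        + Ric Y Z * ⟪X, W⟫ - Ric Y W * ⟪X, Z⟫) / ((finrank ℝ T : ℝ) - 2)
    + scal * (⟪X, W⟫ * ⟪Y, Z⟫ - ⟪X, Z⟫ * ⟪Y, W⟫)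
        / (((finrank ℝ T : ℝ) - 1) * ((finrank ℝ T : ℝ) - 2))

variable {R : T → T → T → T → ℝ} {Ric : T → T → ℝ} {scal : ℝ}

theorem apply_eq_of_weylTensor_eq_zero {x y : T} (hW : weylTensor R Ric scal x y y x = 0)
    (hx : ‖x‖ = 1) (hy : ‖y‖ = 1) (hxy : ⟪x, y⟫ = 0) :
    R x y y x = (Ric x x + Ric y y) / ((finrank ℝ T : ℝ) - 2)
      - scal / (((finrank ℝ T : ℝ) - 1) * ((finrank ℝ T : ℝ) - 2)) := by
  rw [weylTensor, real_inner_self_eq_norm_sq, real_inner_self_eq_norm_sq, hx, hy, hxy,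
    real_inner_comm, hxy] at hW
  linear_combination hW

theorem apply_add_apply_eq_of_weylTensor_eq_zero
    (hW : ∀ X Y Z W, weylTensor R Ric scal X Y Z W = 0) {x x' y y' : T}
    (hx : ‖x‖ = 1) (hx' : ‖x'‖ = 1) (hy : ‖y‖ = 1) (hy' : ‖y'‖ = 1)
    (hxx' : ⟪x, x'⟫ = 0) (hyy' : ⟪y, y'⟫ = 0) (hxy : ⟪x, y⟫ = 0) (hx'y' : ⟪x', y'⟫ = 0) :
    R x x' x' x + R y y' y' y = R x y y x + R x' y' y' x' := by
  rw [apply_eq_of_weylTensor_eq_zero (hW ..) hx hx' hxx',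
    apply_eq_of_weylTensor_eq_zero (hW ..) hy hy' hyy',
    apply_eq_of_weylTensor_eq_zero (hW ..) hx hy hxy,
    apply_eq_of_weylTensor_eq_zero (hW ..) hx' hy' hx'y']
  ring

end Weyl

end

theorem stmt9_general {T N : Type*} [NormedAddCommGroup T] [InnerProductSpace ℝ T]
    [FiniteDimensional ℝ T] [NormedAddCommGroup N] [InnerProductSpace ℝ N]
    {k : ℕ} (E : Fin k → Submodule ℝ T) (η : Fin k → N)
    (hdist : Function.Injective η)
    (horth : ∀ i j, i ≠ j → ∀ X ∈ E i, ∀ Y ∈ E j, ⟪X, Y⟫ = 0)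
    (α : T → T → N)
    (hα : ∀ X Y : T, α X Y =
      ∑ i, ⟪(((E i).orthogonalProjectionOnto X : E i) : T),
            (((E i).orthogonalProjectionOnto Y : E i) : T)⟫ • η i)
    -- the Gauss-equation curvature tensor
    (R : T → T → T → T → ℝ)
    (hR : ∀ X Y Z W : T, R X Y Z W = ⟪α X W, α Y Z⟫ - ⟪α X Z, α Y W⟫)
    -- the Ricci tensor, scalar curvature and Weyl tensor of R
    (Ric : T → T → ℝ)
    (scal : ℝ)
    (Weyl : T → T → T → T → ℝ)
    (hWeyl : ∀ X Y Z W : T, Weyl X Y Z W = R X Y Z W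
      - (Ric X W * ⟪Y, Z⟫ - Ric X Z * ⟪Y, W⟫
          + Ric Y Z * ⟪X, W⟫ - Ric Y W * ⟪X, Z⟫) / ((finrank ℝ T : ℝ) - 2)
      + scal * (⟪X, W⟫ * ⟪Y, Z⟫ - ⟪X, Z⟫ * ⟪Y, W⟫)
          / (((finrank ℝ T : ℝ) - 1) * ((finrank ℝ T : ℝ) - 2)))
    -- conformal flatness: the Weyl tensor vanishes
    (hW0 : ∀ X Y Z W : T, Weyl X Y Z W = 0) :
    ∀ i j, 1 < finrank ℝ (E i) → 1 < finrank ℝ (E j) → i = j := by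
  intro i j hi hj
  by_contra hij
  have hE : Pairwise fun a b => E a ⟂ E b := fun a b hab =>
    Submodule.isOrtho_iff_inner_eq.mpr (horth a b hab)
  have hαE : α = diagonalForm E η := funext fun X => funext (hα X)
  have hsectional : ∀ a b x y, x ∈ E a → y ∈ E b → ‖x‖ = 1 → ‖y‖ = 1 → ⟪x, y⟫ = 0 →
      R x y y x = ⟪η a, η b⟫ := by
    intro a b x y hx hy hxn hyn hxy
    rw [hR, hαE, inner_diagonalForm_sub_inner_diagonalForm η hE hx hy,
      real_inner_self_eq_norm_sq, real_inner_self_eq_norm_sq, hxn, hyn, hxy]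
    ring
  obtain ⟨x, hx, x', hx', hxn, hx'n, hxx'⟩ := Submodule.exists_orthonormal_pair_of_one_lt_finrank hi
  obtain ⟨y, hy, y', hy', hyn, hy'n, hyy'⟩ := Submodule.exists_orthonormal_pair_of_one_lt_finrank hj
  have hflat := apply_add_apply_eq_of_weylTensor_eq_zero
    (fun X Y Z W => (hWeyl X Y Z W).symm.trans (hW0 X Y Z W)) hxn hx'n hyn hy'n hxx' hyy'
    (horth i j hij x hx y hy) (horth i j hij x' hx' y' hy')
  rw [hsectional i i x x' hx hx' hxn hx'n hxx', hsectional j j y y' hy hy' hyn hy'n hyy',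
    hsectional i j x y hx hy hxn hyn (horth i j hij x hx y hy),
    hsectional i j x' y' hx' hy' hx'n hy'n (horth i j hij x' hx' y' hy')] at hflat
  have hsub : ‖η i - η j‖ ^ 2 = 0 := by
    rw [norm_sub_sq_real, ← real_inner_self_eq_norm_sq, ← real_inner_self_eq_norm_sq]
    linarith
  exact hij (hdist (sub_eq_zero.mp (by simpa using hsub)))

/-- If the Gauss-equation curvature tensor of α(X,Y) = Σᵢ⟨Xᵢ,Yᵢ⟩ηᵢ (k ≥ 3 pairwise distinct principal normals, n ≥ 4) has vanishing Weyl tensor, then at most one subspace E_i has dimension larger than one. -/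
theorem stmt9 {T N : Type*} [NormedAddCommGroup T] [InnerProductSpace ℝ T]
    [FiniteDimensional ℝ T] [NormedAddCommGroup N] [InnerProductSpace ℝ N]
    (hn : 4 ≤ finrank ℝ T)
    {k : ℕ} (hk : 3 ≤ k) (E : Fin k → Submodule ℝ T) (η : Fin k → N)
    (hne : ∀ i, E i ≠ ⊥)
    (hdist : Function.Injective η)
    (horth : ∀ i j, i ≠ j → ∀ X ∈ E i, ∀ Y ∈ E j, ⟪X, Y⟫ = 0)
    (hspan : (⨆ i, E i) = ⊤)
    (α : T → T → N)
    (hα : ∀ X Y : T, α X Y =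
      ∑ i, ⟪(((E i).orthogonalProjectionOnto X : E i) : T),
            (((E i).orthogonalProjectionOnto Y : E i) : T)⟫ • η i)
    -- the Gauss-equation curvature tensor
    (R : T → T → T → T → ℝ)
    (hR : ∀ X Y Z W : T, R X Y Z W = ⟪α X W, α Y Z⟫ - ⟪α X Z, α Y W⟫)
    -- the Ricci tensor, scalar curvature and Weyl tensor of R
    (Ric : T → T → ℝ)
    (hRic : ∀ X Y : T, Ric X Y =
      ∑ a, R (stdOrthonormalBasis ℝ T a) X Y (stdOrthonormalBasis ℝ T a))
    (scal : ℝ)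
    (hscal : scal = ∑ a, Ric (stdOrthonormalBasis ℝ T a) (stdOrthonormalBasis ℝ T a))
    (Weyl : T → T → T → T → ℝ)
    (hWeyl : ∀ X Y Z W : T, Weyl X Y Z W = R X Y Z W
      - (Ric X W * ⟪Y, Z⟫ - Ric X Z * ⟪Y, W⟫
          + Ric Y Z * ⟪X, W⟫ - Ric Y W * ⟪X, Z⟫) / ((finrank ℝ T : ℝ) - 2)
      + scal * (⟪X, W⟫ * ⟪Y, Z⟫ - ⟪X, Z⟫ * ⟪Y, W⟫)
          / (((finrank ℝ T : ℝ) - 1) * ((finrank ℝ T : ℝ) - 2)))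
    -- conformal flatness: the Weyl tensor vanishes
    (hW0 : ∀ X Y Z W : T, Weyl X Y Z W = 0) :
    ∀ i j, 1 < finrank ℝ (E i) → 1 < finrank ℝ (E j) → i = j :=
  stmt9_general E η hdist horth α hα R hR Ric scal Weyl hWeyl hW0
end

section
/- A conformally flat pointwise algebraic curvature condition (vanishing Weyl tensor in dimension n ≥ 4) for the Gauss-equation curvature tensor of α(X,Y) = Σᵢ⟨Xᵢ,Yᵢ⟩ηᵢ with k ≥ 3 implies: for all pairwise distinct indices i, j, ℓ, the vectors η_j − η_i and η_j − η_ℓ are linearly independent. -/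
/-!
A vanishing Weyl tensor makes `R` the Kulkarni–Nomizu product of the Schouten tensor with the
metric. On orthonormal `x ∈ E p`, `y ∈ E q` this reads `⟪η p, η q⟫ = a p + a q`, where `a p` is
the Schouten eigenvalue on `E p`. So the Gram matrix of the `η p` is `a p + a q + δ_pq u p`, with
`u p = 0` as soon as `dim E p ≥ 2` (take `p = q`), and `u p + u q = ‖η p - η q‖² > 0` for `p ≠ q`.
The Gram determinant of `η j - η i, η j - η ℓ` is `u i u j + u j u ℓ + u ℓ u i`, which is positive
when one of the three `u` vanishes. Since `n ≥ 4`, either one of `E i, E j, E ℓ` has dimension at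
least two, or there is a fourth index `m`; then pairing a linear relation with the `η p - η m`
forces its coefficients to vanish.
-/

open RealInnerProductSpace Module

section Gram

variable {ι N : Type*} [DecidableEq ι] [NormedAddCommGroup N] [InnerProductSpace ℝ N]
  {η : ι → N} {a u : ι → ℝ}

theorem inner_sub_sub_of_gram (hG : ∀ p q, ⟪η p, η q⟫ = a p + a q + if p = q then u p else 0)
    (p q r s : ι) :
    ⟪η p - η q, η r - η s⟫ = (if p = r then u p else 0) - (if p = s then u p else 0)
      - (if q = r then u q else 0) + (if q = s then u q else 0) := by
  simp only [inner_sub_left, inner_sub_right, hG]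
  ring

theorem add_pos_of_gram (hG : ∀ p q, ⟪η p, η q⟫ = a p + a q + if p = q then u p else 0)
    (hη : Function.Injective η) {p q : ι} (hpq : p ≠ q) : 0 < u p + u q := by
  have hsq : ⟪η p - η q, η p - η q⟫ = u p + u q := by
    rw [inner_sub_sub_of_gram hG]
    simp [hpq, hpq.symm]
  rw [← hsq, real_inner_self_pos, sub_ne_zero]
  exact hη.ne hpq

theorem linearIndependent_sub_sub_of_gram_of_eq_zero
    (hG : ∀ p q, ⟪η p, η q⟫ = a p + a q + if p = q then u p else 0)
    (hη : Function.Injective η) {i j ℓ : ι} (hij : i ≠ j) (hjl : j ≠ ℓ) (hil : i ≠ ℓ)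
    (hu : u i = 0 ∨ u j = 0 ∨ u ℓ = 0) :
    LinearIndependent ℝ ![η j - η i, η j - η ℓ] := by
  have hpos_ij := add_pos_of_gram hG hη hij
  have hpos_jl := add_pos_of_gram hG hη hjl
  have hpos_il := add_pos_of_gram hG hη hil
  refine Matrix.linearIndependent_of_det_gram_ne_zero (𝕜 := ℝ) (ne_of_gt ?_)
  simp only [Matrix.det_fin_two, Matrix.gram_apply, Matrix.cons_val_zero, Matrix.cons_val_one,
    inner_sub_sub_of_gram hG]
  simp only [if_pos, hij, hjl, hil, hij.symm, hjl.symm, hil.symm, if_false]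
  have hdet : 0 < u i * u j + u j * u ℓ + u ℓ * u i := by
    rcases hu with h | h | h <;> rw [h]
    · nlinarith [mul_pos (show 0 < u j by linarith) (show 0 < u ℓ by linarith)]
    · nlinarith [mul_pos (show 0 < u i by linarith) (show 0 < u ℓ by linarith)]
    · nlinarith [mul_pos (show 0 < u i by linarith) (show 0 < u j by linarith)]
  linarith

theorem linearIndependent_sub_sub_of_gram_of_ne
    (hG : ∀ p q, ⟪η p, η q⟫ = a p + a q + if p = q then u p else 0)
    (hη : Function.Injective η) {i j ℓ m : ι} (hij : i ≠ j) (hjl : j ≠ ℓ) (hil : i ≠ ℓ)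
    (hmi : m ≠ i) (hmj : m ≠ j) (hml : m ≠ ℓ) :
    LinearIndependent ℝ ![η j - η i, η j - η ℓ] := by
  rw [LinearIndependent.pair_iff]
  intro s t hst
  have hw : ∀ p, s * ⟪η j - η i, η p - η m⟫ + t * ⟪η j - η ℓ, η p - η m⟫ = 0 := fun p => by
    simpa [inner_add_left, real_inner_smul_left] using congrArg (⟪·, η p - η m⟫) hst
  have hwi := hw i
  have hwj := hw j
  have hwl := hw ℓ
  simp only [inner_sub_sub_of_gram hG, if_pos, hij, hjl, hil, hij.symm, hjl.symm,
    hil.symm, hmi.symm, hmj.symm, hml.symm, if_false] at hwi hwj hwl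
  have hsi : s * u i = 0 := by linear_combination -hwi
  have hstj : (s + t) * u j = 0 := by linear_combination hwj
  have htl : t * u ℓ = 0 := by linear_combination -hwl
  have hpos_ij := add_pos_of_gram hG hη hij
  have hpos_jl := add_pos_of_gram hG hη hjl
  have hpos_il := add_pos_of_gram hG hη hil
  have hs : s = 0 := by
    by_contra hs
    have hui : u i = 0 := (mul_eq_zero.mp hsi).resolve_left hs
    have ht : t = 0 := (mul_eq_zero.mp htl).resolve_right (by linarith)
    have hst : s + t = 0 := (mul_eq_zero.mp hstj).resolve_right (by linarith)
    exact hs (by linarith)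
  subst hs
  have htjl : t * (u j + u ℓ) = 0 := by linear_combination hstj + htl
  exact ⟨rfl, (mul_eq_zero.mp htjl).resolve_right hpos_jl.ne'⟩

end Gram

theorem Submodule.finrank_iSup_le_sum {K V ι : Type*} [DivisionRing K] [AddCommGroup V]
    [Module K V] [FiniteDimensional K V] [Fintype ι] (E : ι → Submodule K V) :
    finrank K ↥(⨆ i, E i) ≤ ∑ i, finrank K (E i) := by
  classical
  rw [← Finset.sup_univ_eq_iSup]
  induction (Finset.univ : Finset ι) using Finset.induction_on with
  | empty => simp
  | insert i s hi ih =>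
    rw [Finset.sup_insert, Finset.sum_insert hi]
    exact (Submodule.finrank_add_le_finrank_add_finrank _ _).trans (by omega)

theorem exists_two_le_finrank_of_iSup_eq_top {K V ι : Type*} [DivisionRing K] [AddCommGroup V]
    [Module K V] [FiniteDimensional K V] [Fintype ι] {E : ι → Submodule K V}
    (hE : ⨆ i, E i = ⊤) (hcard : Fintype.card ι < finrank K V) : ∃ i, 2 ≤ finrank K (E i) := by
  by_contra! h
  have : finrank K V ≤ Fintype.card ι :=
    calc finrank K V = finrank K ↥(⨆ i, E i) := by rw [hE, finrank_top]
      _ ≤ ∑ i, finrank K (E i) := Submodule.finrank_iSup_le_sum E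
      _ ≤ ∑ _i : ι, 1 := Finset.sum_le_sum fun i _ => Nat.le_of_lt_succ (h i)
      _ = Fintype.card ι := by simp
  omega

theorem exists_ne_or_two_le_finrank_of_iSup_eq_top {K V ι : Type*} [DivisionRing K]
    [AddCommGroup V] [Module K V] [FiniteDimensional K V] [Fintype ι] {E : ι → Submodule K V}
    (hE : ⨆ i, E i = ⊤) (hV : 3 < finrank K V) (i j ℓ : ι) :
    (∃ m, m ≠ i ∧ m ≠ j ∧ m ≠ ℓ) ∨
      2 ≤ finrank K (E i) ∨ 2 ≤ finrank K (E j) ∨ 2 ≤ finrank K (E ℓ) := by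
  classical
  rw [or_iff_not_imp_left]
  intro hm
  have hcover : ∀ m, m = i ∨ m = j ∨ m = ℓ := fun m => by
    by_contra! h
    exact hm ⟨m, h⟩
  have hcard : Fintype.card ι < finrank K V := by
    have hsub : (Finset.univ : Finset ι) ⊆ {i, j, ℓ} := fun m _ => by simpa using hcover m
    have := (Finset.card_le_card hsub).trans Finset.card_le_three
    rw [Finset.card_univ] at this
    omega
  obtain ⟨p, hp⟩ := exists_two_le_finrank_of_iSup_eq_top hE hcard
  rcases hcover p with rfl | rfl | rfl <;> simp [hp]

theorem exists_orthonormal_pair_of_two_le_finrank {V : Type*} [NormedAddCommGroup V]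
    [InnerProductSpace ℝ V] [FiniteDimensional ℝ V] (h : 2 ≤ finrank ℝ V) :
    ∃ x y : V, ‖x‖ = 1 ∧ ‖y‖ = 1 ∧ ⟪x, y⟫ = 0 := by
  let b := stdOrthonormalBasis ℝ V
  have h01 : (⟨0, by omega⟩ : Fin (finrank ℝ V)) ≠ ⟨1, by omega⟩ := by simp
  exact ⟨b _, b _, b.orthonormal.1 _, b.orthonormal.1 _, b.orthonormal.2 h01⟩

section Block

variable {T N ι : Type*} [NormedAddCommGroup T] [InnerProductSpace ℝ T] [NormedAddCommGroup N]
  [InnerProductSpace ℝ N]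

theorem sum_inner_orthogonalProjectionOnto_smul_of_mem [Fintype ι] {E : ι → Submodule ℝ T}
    [∀ i, (E i).HasOrthogonalProjection] (η : ι → N)
    (horth : ∀ i j, i ≠ j → ∀ X ∈ E i, ∀ Y ∈ E j, ⟪X, Y⟫ = 0) {q : ι} {y : T} (hy : y ∈ E q)
    (X : T) :
    ∑ i, ⟪((E i).orthogonalProjectionOnto X : T), ((E i).orthogonalProjectionOnto y : T)⟫ • η i
      = ⟪X, y⟫ • η q := by
  classical
  rw [Finset.sum_eq_single q]
  · rw [(E q).orthogonalProjectionOnto_mem_subspace_eq_self ⟨y, hy⟩,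
      ← Submodule.coe_inner, Submodule.inner_orthogonalProjectionOnto_eq_of_mem_right]
  · intro i _ hi
    rw [Submodule.orthogonalProjectionOnto_apply_of_mem_orthogonal (v := y), Submodule.coe_zero,
      inner_zero_right, zero_smul]
    exact (Submodule.mem_orthogonal _ _).mpr fun Z hZ => horth i q hi Z hZ y hy
  · simp

variable {α : T → T → N} {R Weyl : T → T → T → T → ℝ} {Ric : T → T → ℝ} {scal : ℝ}

theorem ricci_apply_self_eq {ι' : Type*} [Fintype ι'] (b : OrthonormalBasis ι' ℝ T)
    (hR : ∀ X Y Z W : T, R X Y Z W = ⟪α X W, α Y Z⟫ - ⟪α X Z, α Y W⟫)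
    (hRic : ∀ X Y : T, Ric X Y = ∑ a, R (b a) X Y (b a)) (hsymm : ∀ X Y, α X Y = α Y X)
    {x : T} {ζ : N} (hαx : ∀ X, α X x = ⟪X, x⟫ • ζ) (hx : ‖x‖ = 1) :
    Ric x x = ⟪∑ a, α (b a) (b a), ζ⟫ - ⟪ζ, ζ⟫ := by
  have hxx : α x x = ζ := by rw [hαx, real_inner_self_eq_norm_sq, hx, one_pow, one_smul]
  have hterm : ∀ a, R (b a) x x (b a) = ⟪α (b a) (b a), ζ⟫ - ⟪x, b a⟫ * ⟪b a, x⟫ * ⟪ζ, ζ⟫ := by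
    intro a
    rw [hR, hxx, hsymm x (b a), hαx, real_inner_smul_left, real_inner_smul_right,
      real_inner_comm x (b a)]
    ring
  rw [hRic, Finset.sum_congr rfl fun a _ => hterm a, Finset.sum_sub_distrib, ← sum_inner,
    ← Finset.sum_mul, b.sum_inner_mul_inner, real_inner_self_eq_norm_sq, hx]
  ring

theorem weyl_apply_of_orthonormal
    (hWeyl : ∀ X Y Z W : T, Weyl X Y Z W = R X Y Z W
      - (Ric X W * ⟪Y, Z⟫ - Ric X Z * ⟪Y, W⟫
          + Ric Y Z * ⟪X, W⟫ - Ric Y W * ⟪X, Z⟫) / ((finrank ℝ T : ℝ) - 2)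
      + scal * (⟪X, W⟫ * ⟪Y, Z⟫ - ⟪X, Z⟫ * ⟪Y, W⟫)
          / (((finrank ℝ T : ℝ) - 1) * ((finrank ℝ T : ℝ) - 2)))
    {x y : T} (hx : ‖x‖ = 1) (hy : ‖y‖ = 1) (hxy : ⟪x, y⟫ = 0) :
    Weyl x y y x = R x y y x - (Ric x x + Ric y y) / ((finrank ℝ T : ℝ) - 2)
      + scal / (((finrank ℝ T : ℝ) - 1) * ((finrank ℝ T : ℝ) - 2)) := by
  rw [hWeyl, real_inner_self_eq_norm_sq, real_inner_self_eq_norm_sq, hx, hy, hxy,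
    real_inner_comm, hxy]
  ring

theorem exists_inner_eq_add_of_weyl_eq_zero [Fintype ι] {E : ι → Submodule ℝ T}
    [∀ i, (E i).HasOrthogonalProjection] {η : ι → N}
    (horth : ∀ i j, i ≠ j → ∀ X ∈ E i, ∀ Y ∈ E j, ⟪X, Y⟫ = 0)
    (hα : ∀ X Y : T, α X Y =
      ∑ i, ⟪((E i).orthogonalProjectionOnto X : T), ((E i).orthogonalProjectionOnto Y : T)⟫ • η i)
    {ι' : Type*} [Fintype ι'] (b : OrthonormalBasis ι' ℝ T)
    (hR : ∀ X Y Z W : T, R X Y Z W = ⟪α X W, α Y Z⟫ - ⟪α X Z, α Y W⟫)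
    (hRic : ∀ X Y : T, Ric X Y = ∑ a, R (b a) X Y (b a))
    (hWeyl : ∀ X Y Z W : T, Weyl X Y Z W = R X Y Z W
      - (Ric X W * ⟪Y, Z⟫ - Ric X Z * ⟪Y, W⟫
          + Ric Y Z * ⟪X, W⟫ - Ric Y W * ⟪X, Z⟫) / ((finrank ℝ T : ℝ) - 2)
      + scal * (⟪X, W⟫ * ⟪Y, Z⟫ - ⟪X, Z⟫ * ⟪Y, W⟫)
          / (((finrank ℝ T : ℝ) - 1) * ((finrank ℝ T : ℝ) - 2)))
    (hW0 : ∀ X Y Z W : T, Weyl X Y Z W = 0) :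
    ∃ a : ι → ℝ, ∀ p q, ∀ x ∈ E p, ∀ y ∈ E q, ‖x‖ = 1 → ‖y‖ = 1 → ⟪x, y⟫ = 0 →
      ⟪η p, η q⟫ = a p + a q := by
  have hαE : ∀ q, ∀ y ∈ E q, ∀ X, α X y = ⟪X, y⟫ • η q := fun q y hy X =>
    (hα X y).trans (sum_inner_orthogonalProjectionOnto_smul_of_mem η horth hy X)
  have hsymm : ∀ X Y, α X Y = α Y X := fun X Y => by simp only [hα, real_inner_comm]
  let d : ℝ := finrank ℝ T
  refine ⟨fun p => (⟪∑ c, α (b c) (b c), η p⟫ - ⟪η p, η p⟫) / (d - 2)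
    - scal / ((d - 1) * (d - 2)) / 2, fun p q x hx y hy hx1 hy1 hxy => ?_⟩
  have hyx : ⟪y, x⟫ = 0 := by rw [real_inner_comm, hxy]
  have hRxy : R x y y x = ⟪η p, η q⟫ := by
    simp [hR, hαE p x hx, hαE q y hy, hxy, hyx, hx1, hy1]
  have h := hW0 x y y x
  rw [weyl_apply_of_orthonormal hWeyl hx1 hy1 hxy, hRxy,
    ricci_apply_self_eq b hR hRic hsymm (hαE p x hx) hx1,
    ricci_apply_self_eq b hR hRic hsymm (hαE q y hy) hy1] at h
  linear_combination h

theorem inner_eq_add_add_ite_of_inner_eq_add [DecidableEq ι] {E : ι → Submodule ℝ T}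
    {η : ι → N} {a : ι → ℝ} (hne : ∀ i, E i ≠ ⊥)
    (horth : ∀ i j, i ≠ j → ∀ X ∈ E i, ∀ Y ∈ E j, ⟪X, Y⟫ = 0)
    (ha : ∀ p q, ∀ x ∈ E p, ∀ y ∈ E q, ‖x‖ = 1 → ‖y‖ = 1 → ⟪x, y⟫ = 0 →
      ⟪η p, η q⟫ = a p + a q) (p q : ι) :
    ⟪η p, η q⟫ = a p + a q + if p = q then ⟪η p, η p⟫ - 2 * a p else 0 := by
  by_cases hpq : p = q
  · subst hpq
    rw [if_pos rfl]
    ring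
  have := Submodule.nontrivial_iff_ne_bot.mpr (hne p)
  have := Submodule.nontrivial_iff_ne_bot.mpr (hne q)
  obtain ⟨x, hx⟩ := exists_norm_eq (E p) zero_le_one
  obtain ⟨y, hy⟩ := exists_norm_eq (E q) zero_le_one
  rw [if_neg hpq, add_zero]
  exact ha p q x x.2 y y.2 hx hy (horth p q hpq x x.2 y y.2)

theorem inner_self_eq_two_mul_of_two_le_finrank {E : ι → Submodule ℝ T} {η : ι → N}
    {a : ι → ℝ} (ha : ∀ p q, ∀ x ∈ E p, ∀ y ∈ E q, ‖x‖ = 1 → ‖y‖ = 1 → ⟪x, y⟫ = 0 →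
      ⟪η p, η q⟫ = a p + a q) {p : ι} [FiniteDimensional ℝ (E p)] (hp : 2 ≤ finrank ℝ (E p)) :
    ⟪η p, η p⟫ = 2 * a p := by
  obtain ⟨x, y, hx, hy, hxy⟩ := exists_orthonormal_pair_of_two_le_finrank hp
  rw [ha p p x x.2 y y.2 hx hy (by rw [← Submodule.coe_inner, hxy])]
  ring

end Block

theorem stmt10_general {T N : Type*} [NormedAddCommGroup T] [InnerProductSpace ℝ T]
    [FiniteDimensional ℝ T] [NormedAddCommGroup N] [InnerProductSpace ℝ N]
    (hn : 4 ≤ finrank ℝ T)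
    {k : ℕ} (E : Fin k → Submodule ℝ T) (η : Fin k → N)
    (hne : ∀ i, E i ≠ ⊥)
    (hdist : Function.Injective η)
    (horth : ∀ i j, i ≠ j → ∀ X ∈ E i, ∀ Y ∈ E j, ⟪X, Y⟫ = 0)
    (hspan : (⨆ i, E i) = ⊤)
    (α : T → T → N)
    (hα : ∀ X Y : T, α X Y =
      ∑ i, ⟪((Submodule.orthogonalProjectionOnto (E i) X : E i) : T),
            ((Submodule.orthogonalProjectionOnto (E i) Y : E i) : T)⟫ • η i)
    -- the Gauss-equation curvature tensor
    (R : T → T → T → T → ℝ)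
    (hR : ∀ X Y Z W : T, R X Y Z W = ⟪α X W, α Y Z⟫ - ⟪α X Z, α Y W⟫)
    -- the Ricci tensor, scalar curvature and Weyl tensor of R
    (Ric : T → T → ℝ)
    (hRic : ∀ X Y : T, Ric X Y =
      ∑ a, R (stdOrthonormalBasis ℝ T a) X Y (stdOrthonormalBasis ℝ T a))
    (scal : ℝ)
    (Weyl : T → T → T → T → ℝ)
    (hWeyl : ∀ X Y Z W : T, Weyl X Y Z W = R X Y Z W
      - (Ric X W * ⟪Y, Z⟫ - Ric X Z * ⟪Y, W⟫
          + Ric Y Z * ⟪X, W⟫ - Ric Y W * ⟪X, Z⟫) / ((finrank ℝ T : ℝ) - 2)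
      + scal * (⟪X, W⟫ * ⟪Y, Z⟫ - ⟪X, Z⟫ * ⟪Y, W⟫)
          / (((finrank ℝ T : ℝ) - 1) * ((finrank ℝ T : ℝ) - 2)))
    -- conformal flatness: the Weyl tensor vanishes
    (hW0 : ∀ X Y Z W : T, Weyl X Y Z W = 0) :
    ∀ i j ℓ : Fin k, i ≠ j → j ≠ ℓ → i ≠ ℓ →
      LinearIndependent ℝ ![η j - η i, η j - η ℓ] := by
  intro i j ℓ hij hjl hil
  obtain ⟨a, ha⟩ := exists_inner_eq_add_of_weyl_eq_zero horth hα _ hR hRic hWeyl hW0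
  have hG := inner_eq_add_add_ite_of_inner_eq_add hne horth ha
  rcases exists_ne_or_two_le_finrank_of_iSup_eq_top hspan (by omega) i j ℓ with
    ⟨m, hmi, hmj, hml⟩ | hbig
  · exact linearIndependent_sub_sub_of_gram_of_ne hG hdist hij hjl hil hmi hmj hml
  · have hu : ∀ p, 2 ≤ finrank ℝ (E p) → ⟪η p, η p⟫ - 2 * a p = 0 := fun p hp =>
      sub_eq_zero.mpr (inner_self_eq_two_mul_of_two_le_finrank ha hp)
    exact linearIndependent_sub_sub_of_gram_of_eq_zero hG hdist hij hjl hil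
      (hbig.imp (hu i) (Or.imp (hu j) (hu ℓ)))

/-- Vanishing Weyl tensor (n ≥ 4) for the Gauss-equation curvature tensor of α(X,Y) = Σᵢ⟨Xᵢ,Yᵢ⟩ηᵢ with k ≥ 3 implies: for all pairwise distinct i, j, ℓ the vectors η_j − η_i and η_j − η_ℓ are linearly independent. -/
theorem stmt10 {T N : Type*} [NormedAddCommGroup T] [InnerProductSpace ℝ T]
    [FiniteDimensional ℝ T] [NormedAddCommGroup N] [InnerProductSpace ℝ N]
    (hn : 4 ≤ finrank ℝ T)
    {k : ℕ} (hk : 3 ≤ k) (E : Fin k → Submodule ℝ T) (η : Fin k → N)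
    (hne : ∀ i, E i ≠ ⊥)
    (hdist : Function.Injective η)
    (horth : ∀ i j, i ≠ j → ∀ X ∈ E i, ∀ Y ∈ E j, ⟪X, Y⟫ = 0)
    (hspan : (⨆ i, E i) = ⊤)
    (α : T → T → N)
    (hα : ∀ X Y : T, α X Y =
      ∑ i, ⟪((Submodule.orthogonalProjectionOnto (E i) X : E i) : T),
            ((Submodule.orthogonalProjectionOnto (E i) Y : E i) : T)⟫ • η i)
    -- the Gauss-equation curvature tensor
    (R : T → T → T → T → ℝ)
    (hR : ∀ X Y Z W : T, R X Y Z W = ⟪α X W, α Y Z⟫ - ⟪α X Z, α Y W⟫)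
    -- the Ricci tensor, scalar curvature and Weyl tensor of R
    (Ric : T → T → ℝ)
    (hRic : ∀ X Y : T, Ric X Y =
      ∑ a, R (stdOrthonormalBasis ℝ T a) X Y (stdOrthonormalBasis ℝ T a))
    (scal : ℝ)
    (hscal : scal = ∑ a, Ric (stdOrthonormalBasis ℝ T a) (stdOrthonormalBasis ℝ T a))
    (Weyl : T → T → T → T → ℝ)
    (hWeyl : ∀ X Y Z W : T, Weyl X Y Z W = R X Y Z W
      - (Ric X W * ⟪Y, Z⟫ - Ric X Z * ⟪Y, W⟫
          + Ric Y Z * ⟪X, W⟫ - Ric Y W * ⟪X, Z⟫) / ((finrank ℝ T : ℝ) - 2)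
      + scal * (⟪X, W⟫ * ⟪Y, Z⟫ - ⟪X, Z⟫ * ⟪Y, W⟫)
          / (((finrank ℝ T : ℝ) - 1) * ((finrank ℝ T : ℝ) - 2)))
    -- conformal flatness: the Weyl tensor vanishes
    (hW0 : ∀ X Y Z W : T, Weyl X Y Z W = 0) :
    ∀ i j ℓ : Fin k, i ≠ j → j ≠ ℓ → i ≠ ℓ →
      LinearIndependent ℝ ![η j - η i, η j - η ℓ] :=
  stmt10_general hn E η hne hdist horth hspan α hα R hR Ric hRic scal Weyl hWeyl hW0
end

section
/- For a submanifold of ℝ^m with flat normal bundle that is isoparametric (each shape operator A_ξ in a parallel normal direction ξ has constant eigenvalues), the principal normal vector fields η₁, …, η_k are parallel in the normal connection: ∇^⊥_Z η_i = 0 for all tangent Z. -/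
/-- For a proper submanifold of ℝᵐ with flat normal bundle which is isoparametric (the shape operator A_ξ in any parallel normal direction ξ has constant eigenvalues; the eigenvalues of A_ξ are the functions ⟨ηᵢ, ξ⟩), the principal normal vector fields are parallel in the normal connection: ∇⊥_Z ηᵢ = 0 for all tangent Z. Flatness of the normal bundle is expressed by the fact that the parallel normal fields span the normal bundle. -/
theorem stmt13
    -- C is the ring of smooth functions on M, Γ the C-module of tangent vector
    -- fields of the immersion f : Mⁿ → ℝᵐ, and Ξ the C-module of normal fields
    {C : Type*} [CommRing C] [Algebra ℝ C]
    {Γ : Type*} [AddCommGroup Γ] [Module C Γ]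
    {Ξ : Type*} [AddCommGroup Ξ] [Module C Ξ]
    -- the induced metric on M and the metric on the normal bundle
    (g : Γ →ₗ[C] Γ →ₗ[C] C) (gsymm : ∀ X Y, g X Y = g Y X)
    (gN : Ξ →ₗ[C] Ξ →ₗ[C] C) (gNsymm : ∀ ξ ζ, gN ξ ζ = gN ζ ξ)
    (gNnondeg : ∀ ξ : Ξ, (∀ ζ : Ξ, gN ξ ζ = 0) → ξ = 0)
    -- the second fundamental form of f (C-bilinear and symmetric)
    (α : Γ →ₗ[C] Γ →ₗ[C] Ξ) (αsymm : ∀ X Y, α X Y = α Y X)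
    -- directional derivative of functions, Levi-Civita connection ∇ of M and
    -- normal connection ∇⊥, with their Leibniz rules and metric compatibility
    (D : Γ → C → C) (nabla : Γ → Γ → Γ) (nablaP : Γ → Ξ → Ξ)
    (Dconst : ∀ X : Γ, ∀ r : ℝ, D X (algebraMap ℝ C r) = 0)
    (nablaTensX : ∀ (f : C) (X Y : Γ), nabla (f • X) Y = f • nabla X Y)
    (nablaLeib : ∀ (f : C) (X Y : Γ), nabla X (f • Y) = D X f • Y + f • nabla X Y)
    (nablaAdd : ∀ X Y Y' : Γ, nabla X (Y + Y') = nabla X Y + nabla X Y')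
    (nablaPTensX : ∀ (f : C) (X : Γ) (ξ : Ξ), nablaP (f • X) ξ = f • nablaP X ξ)
    (nablaPLeib : ∀ (f : C) (X : Γ) (ξ : Ξ), nablaP X (f • ξ) = D X f • ξ + f • nablaP X ξ)
    (nablaPAdd : ∀ (X : Γ) (ξ ζ : Ξ), nablaP X (ξ + ζ) = nablaP X ξ + nablaP X ζ)
    (gcompat : ∀ X Y Z : Γ, D X (g Y Z) = g (nabla X Y) Z + g Y (nabla X Z))
    (gNcompat : ∀ (X : Γ) (ξ ζ : Ξ), D X (gN ξ ζ) = gN (nablaP X ξ) ζ + gN ξ (nablaP X ζ))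
    -- the Codazzi equation of a submanifold of Euclidean space
    (codazzi : ∀ X Y Z : Γ,
      nablaP X (α Y Z) - α (nabla X Y) Z - α Y (nabla X Z) =
      nablaP Y (α X Z) - α (nabla Y X) Z - α X (nabla Y Z))
    -- f is proper with principal normal vector fields η₁,…,η_k and orthogonal
    -- eigendistributions E₁,…,E_k: α(X,Y) = ⟨X,Y⟩ηᵢ for X ∈ Eᵢ, Y ∈ Γ
    {k : ℕ} (E : Fin k → Submodule C Γ) (η : Fin k → Ξ)
    (hne : ∀ i, E i ≠ ⊥) (hdist : Function.Injective η)
    (horth : ∀ i j, i ≠ j → ∀ X ∈ E i, ∀ Y ∈ E j, g X Y = 0)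
    (hspan : (⨆ i, E i) = ⊤)
    (hE : ∀ i, ∀ X ∈ E i, ∀ Y : Γ, α X Y = g X Y • η i)
    -- flat normal bundle: parallel normal fields span the normal bundle
    (hflat : Submodule.span C {ξ : Ξ | ∀ X : Γ, nablaP X ξ = 0} = ⊤)
    -- isoparametric: for every parallel normal direction ξ the eigenvalues
    -- ⟨ηᵢ, ξ⟩ of the shape operator A_ξ are constant functions on M
    (hiso : ∀ ξ : Ξ, (∀ X : Γ, nablaP X ξ = 0) →
      ∀ i, ∃ c : ℝ, gN (η i) ξ = algebraMap ℝ C c) :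
    ∀ Z : Γ, ∀ i, nablaP Z (η i) = 0 := by
  intro Z i
  apply gNnondeg
  intro ζ
  have hζ : ζ ∈ Submodule.span C {ξ : Ξ | ∀ X : Γ, nablaP X ξ = 0} := by
    rw [hflat]; trivial
  induction hζ using Submodule.span_induction with
  | mem ξ hξ =>
    obtain ⟨c, hc⟩ := hiso ξ hξ i
    have h1 : D Z (gN (η i) ξ) = 0 := by rw [hc]; exact Dconst Z c
    have h2 := gNcompat Z (η i) ξ
    rw [h1, hξ Z, map_zero] at h2
    rw [add_zero] at h2
    exact h2.symm
  | zero => simp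
  | add ξ ζ' _ _ h1 h2 => rw [map_add, h1, h2, add_zero]
  | smul c ξ _ h => rw [map_smul, h, smul_zero]
end

section
/- If f : Mⁿ → ℝ^m is isoparametric (flat normal bundle and constant eigenvalues of shape operators in parallel normal directions) then f is proper, i.e., the number s(x) of distinct principal normals is constant on M. -/
/-!
At a point, vectors belonging to distinct principal normals are orthogonal, and simultaneous
diagonalisation of the commuting symmetric shape operators shows that the eigenvalues of `A_w`
are exactly the numbers `⟪η, w⟫`, `η` a principal normal. Hence a parallel normal field `ξ`
which is a principal normal at one point is one everywhere: at another point `b`, pair it with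
a parallel field `θ` whose value at `b` separates `ξ b` from the principal normals there; the
constant `⟪ξ, θ⟫` is an eigenvalue of `A_θ` at the first point, so also at `b`, so it equals
`⟪η, θ b⟫` for a principal normal `η`, forcing `η = ξ b`. Parallel fields thus inject the
principal normals at `x` into those at `y`, and symmetrically.
-/

open RealInnerProductSpace Module.End

section InnerProductSpace

variable {V : Type*} [NormedAddCommGroup V] [InnerProductSpace ℝ V]

-- A real vector space is not a finite union of proper subspaces.
theorem exists_inner_ne_inner_of_finite {S : Set V} (hS : S.Finite) (p : V) :
    ∃ w : V, ∀ e ∈ S, e ≠ p → ⟪e, w⟫ ≠ ⟪p, w⟫ := by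
  have : Finite ↥(S \ {p}) := hS.sdiff.to_subtype
  by_contra! h
  obtain ⟨⟨e, he, hep⟩, htop⟩ := Subspace.exists_eq_top_of_iUnion_eq_univ
    (p := fun e : ↥(S \ {p}) => (ℝ ∙ ((e : V) - p))ᗮ) <| Set.eq_univ_of_forall fun w => by
      obtain ⟨e, he, hep, hw⟩ := h w
      refine Set.mem_iUnion.mpr ⟨⟨e, he, hep⟩, ?_⟩
      simp [Submodule.mem_orthogonal_singleton_iff_inner_right, inner_sub_left, hw]
  rw [Submodule.orthogonal_eq_top_iff, Submodule.span_singleton_eq_bot, sub_eq_zero] at htop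
  exact hep htop

theorem exists_common_eigenvector_of_hasEigenvalue [FiniteDimensional ℝ V] {ι : Type*}
    {T : ι → Module.End ℝ V} (hT : ∀ i, (T i).IsSymmetric)
    (hC : Pairwise (Function.onFun Commute T)) {i₀ : ι} {c : ℝ} (h : (T i₀).HasEigenvalue c) :
    ∃ Y ≠ 0, T i₀ Y = c • Y ∧ ∀ i, ∃ μ : ℝ, T i Y = μ • Y := by
  by_contra! hno
  obtain ⟨v, hv, hv0⟩ := h.exists_hasEigenvector
  have hv' : T i₀ v = c • v := mem_eigenspace_iff.mp hv
  -- every joint eigenspace is orthogonal to `v`, but together they span the whole space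
  suffices (⨆ χ : ι → ℝ, ⨅ i, eigenspace (T i) (χ i)) ≤ (ℝ ∙ v)ᗮ by
    rw [LinearMap.IsSymmetric.iSup_iInf_eq_top_of_commute hT hC] at this
    have hvv := this (Submodule.mem_top (x := v))
    exact hv0 (inner_self_eq_zero.mp (Submodule.mem_orthogonal_singleton_iff_inner_right.mp hvv))
  refine iSup_le fun χ u hu => Submodule.mem_orthogonal_singleton_iff_inner_right.mpr ?_
  have hu' : ∀ i, T i u = χ i • u := fun i =>
    mem_eigenspace_iff.mp ((Submodule.mem_iInf _).mp hu i)
  by_cases hχ : χ i₀ = c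
  · obtain rfl | hu0 := eq_or_ne u 0
    · exact inner_zero_right _
    obtain ⟨i, hi⟩ := hno u hu0 (hχ ▸ hu' i₀)
    exact absurd (hu' i) (hi _)
  · have : c * ⟪v, u⟫ = χ i₀ * ⟪v, u⟫ := by
      rw [← real_inner_smul_left, ← hv', hT i₀, hu' i₀, real_inner_smul_right]
    exact (mul_eq_mul_right_iff.mp this).resolve_left (Ne.symm hχ)

end InnerProductSpace

section ShapeOperator

variable {T N : Type*} [NormedAddCommGroup T] [InnerProductSpace ℝ T]
  [NormedAddCommGroup N] [InnerProductSpace ℝ N]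

def principalNormals (α : T →ₗ[ℝ] T →ₗ[ℝ] N) : Set N :=
  {η | ∃ X : T, X ≠ 0 ∧ ∀ Y : T, α X Y = ⟪X, Y⟫ • η}

/-- Vectors belonging to distinct principal normals are orthogonal, hence linearly independent. -/
theorem principalNormals_finite [FiniteDimensional ℝ T] {α : T →ₗ[ℝ] T →ₗ[ℝ] N}
    (hsymm : ∀ X Y, α X Y = α Y X) : (principalNormals α).Finite := by
  rw [← Set.finite_coe_iff]
  choose X hX0 hXα using fun η : principalNormals α => η.2
  have hortho : Pairwise fun η₁ η₂ => ⟪X η₁, X η₂⟫ = 0 := by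
    intro η₁ η₂ hne
    by_contra h
    refine hne (Subtype.ext (smul_right_injective N h ?_))
    change ⟪X η₁, X η₂⟫ • (η₁ : N) = ⟪X η₁, X η₂⟫ • (η₂ : N)
    rw [← hXα, hsymm, hXα, real_inner_comm]
  exact (linearIndependent_of_ne_zero_of_inner_eq_zero hX0 hortho).finite

variable {α : T →ₗ[ℝ] T →ₗ[ℝ] N} {A : N → Module.End ℝ T}

theorem isSymmetric_shape (hsymm : ∀ X Y, α X Y = α Y X)
    (hA : ∀ ξ X Y, ⟪A ξ X, Y⟫ = ⟪α X Y, ξ⟫) (ξ : N) : (A ξ).IsSymmetric := fun X Y => by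
  rw [hA, hsymm, ← hA, real_inner_comm]

theorem principal_iff_forall_shape_eq (hA : ∀ ξ X Y, ⟪A ξ X, Y⟫ = ⟪α X Y, ξ⟫) {η : N} {X : T} :
    (∀ Y, α X Y = ⟪X, Y⟫ • η) ↔ ∀ ξ, A ξ X = ⟪η, ξ⟫ • X := by
  constructor
  · refine fun h ξ => ext_inner_right ℝ fun Y => ?_
    rw [hA, h, real_inner_smul_left, real_inner_smul_left, mul_comm]
  · refine fun h Y => ext_inner_right ℝ fun ξ => ?_
    rw [← hA, h, real_inner_smul_left, real_inner_smul_left, mul_comm]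

theorem hasEigenvalue_inner_of_mem_principalNormals (hA : ∀ ξ X Y, ⟪A ξ X, Y⟫ = ⟪α X Y, ξ⟫)
    {η : N} (hη : η ∈ principalNormals α) (ξ : N) : (A ξ).HasEigenvalue ⟪η, ξ⟫ := by
  obtain ⟨X, hX0, hX⟩ := hη
  exact hasEigenvalue_of_hasEigenvector
    ⟨mem_eigenspace_iff.mpr ((principal_iff_forall_shape_eq hA).mp hX ξ), hX0⟩

/-- The principal normal of a common eigenvector `Y` is `α(Y, Y) / ‖Y‖²`. -/
theorem exists_principal_of_common_eigenvector (hA : ∀ ξ X Y, ⟪A ξ X, Y⟫ = ⟪α X Y, ξ⟫)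
    {Y : T} (hY : ∀ ξ, ∃ μ : ℝ, A ξ Y = μ • Y) :
    ∃ η : N, ∀ ξ, A ξ Y = ⟪η, ξ⟫ • Y := by
  refine ⟨⟪Y, Y⟫⁻¹ • α Y Y, fun ξ => ?_⟩
  obtain ⟨μ, hμ⟩ := hY ξ
  obtain rfl | hY0 := eq_or_ne Y 0
  · simp
  have hYY : ⟪Y, Y⟫ ≠ 0 := inner_self_ne_zero.mpr hY0
  have : μ * ⟪Y, Y⟫ = ⟪α Y Y, ξ⟫ := by rw [← hA, hμ, real_inner_smul_left]
  rw [hμ, real_inner_smul_left, ← this, mul_comm μ, inv_mul_cancel_left₀ hYY]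

theorem exists_mem_principalNormals_inner_eq [FiniteDimensional ℝ T]
    (hsymm : ∀ X Y, α X Y = α Y X) (hA : ∀ ξ X Y, ⟪A ξ X, Y⟫ = ⟪α X Y, ξ⟫)
    (hcomm : ∀ ξ ζ, A ξ ∘ₗ A ζ = A ζ ∘ₗ A ξ) {w : N} {c : ℝ} (h : (A w).HasEigenvalue c) :
    ∃ η ∈ principalNormals α, ⟪η, w⟫ = c := by
  obtain ⟨Y, hY0, hYw, hY⟩ :=
    exists_common_eigenvector_of_hasEigenvalue (isSymmetric_shape hsymm hA)
      (fun ξ ζ _ => hcomm ξ ζ) h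
  obtain ⟨η, hη⟩ := exists_principal_of_common_eigenvector hA hY
  refine ⟨η, ⟨Y, hY0, (principal_iff_forall_shape_eq hA).mpr hη⟩, smul_left_injective ℝ hY0 ?_⟩
  simp only [← hη, hYw]

end ShapeOperator

section Isoparametric

variable {M : Type*} {Tang Nor : M → Type*} [∀ x, NormedAddCommGroup (Tang x)]
  [∀ x, InnerProductSpace ℝ (Tang x)] [∀ x, NormedAddCommGroup (Nor x)]
  [∀ x, InnerProductSpace ℝ (Nor x)] {Parallel : (∀ x, Nor x) → Prop}

theorem parallel_eq_of_eq (hext : ∀ x (v : Nor x), ∃ ξ, Parallel ξ ∧ ξ x = v)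
    (hpar : ∀ ξ ζ, Parallel ξ → Parallel ζ → ∀ x y, ⟪ξ x, ζ x⟫ = ⟪ξ y, ζ y⟫)
    {ξ ζ : ∀ x, Nor x} (hξ : Parallel ξ) (hζ : Parallel ζ) {a : M} (h : ξ a = ζ a) (b : M) :
    ξ b = ζ b := by
  refine ext_inner_right ℝ fun v => ?_
  obtain ⟨θ, hθ, rfl⟩ := hext b v
  rw [hpar ξ θ hξ hθ b a, hpar ζ θ hζ hθ b a, h]

variable [∀ x, FiniteDimensional ℝ (Tang x)] {α : ∀ x, Tang x →ₗ[ℝ] Tang x →ₗ[ℝ] Nor x}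
  {A : ∀ x, Nor x → Module.End ℝ (Tang x)}

theorem mem_principalNormals_of_parallel (hsymm : ∀ x X Y, α x X Y = α x Y X)
    (hA : ∀ x (ξ : Nor x) (X Y : Tang x), ⟪A x ξ X, Y⟫ = ⟪α x X Y, ξ⟫)
    (hcomm : ∀ x (ξ ζ : Nor x), (A x ξ) ∘ₗ (A x ζ) = (A x ζ) ∘ₗ (A x ξ))
    (hext : ∀ x (v : Nor x), ∃ ξ, Parallel ξ ∧ ξ x = v)
    (hpar : ∀ ξ ζ, Parallel ξ → Parallel ζ → ∀ x y, ⟪ξ x, ζ x⟫ = ⟪ξ y, ζ y⟫)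
    (hiso : ∀ ξ, Parallel ξ → ∀ x y,
      {c : ℝ | (A x (ξ x)).HasEigenvalue c} = {c : ℝ | (A y (ξ y)).HasEigenvalue c})
    {ξ : ∀ x, Nor x} (hξ : Parallel ξ) {a : M} (ha : ξ a ∈ principalNormals (α a)) (b : M) :
    ξ b ∈ principalNormals (α b) := by
  obtain ⟨w, hw⟩ := exists_inner_ne_inner_of_finite (principalNormals_finite (hsymm b)) (ξ b)
  obtain ⟨θ, hθ, rfl⟩ := hext b w
  have hca : (A a (θ a)).HasEigenvalue ⟪ξ a, θ a⟫ :=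
    hasEigenvalue_inner_of_mem_principalNormals (hA a) ha (θ a)
  have hcb : (A b (θ b)).HasEigenvalue ⟪ξ b, θ b⟫ := by
    rw [← hpar ξ θ hξ hθ a b]
    exact (Set.ext_iff.mp (hiso θ hθ a b) _).mp hca
  obtain ⟨η, hη, hηθ⟩ := exists_mem_principalNormals_inner_eq (hsymm b) (hA b) (hcomm b) hcb
  by_contra hξb
  exact hw η hη (by rintro rfl; exact hξb hη) hηθ

theorem ncard_principalNormals_le (hsymm : ∀ x X Y, α x X Y = α x Y X)
    (hA : ∀ x (ξ : Nor x) (X Y : Tang x), ⟪A x ξ X, Y⟫ = ⟪α x X Y, ξ⟫)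
    (hcomm : ∀ x (ξ ζ : Nor x), (A x ξ) ∘ₗ (A x ζ) = (A x ζ) ∘ₗ (A x ξ))
    (hext : ∀ x (v : Nor x), ∃ ξ, Parallel ξ ∧ ξ x = v)
    (hpar : ∀ ξ ζ, Parallel ξ → Parallel ζ → ∀ x y, ⟪ξ x, ζ x⟫ = ⟪ξ y, ζ y⟫)
    (hiso : ∀ ξ, Parallel ξ → ∀ x y,
      {c : ℝ | (A x (ξ x)).HasEigenvalue c} = {c : ℝ | (A y (ξ y)).HasEigenvalue c})
    (x y : M) : (principalNormals (α x)).ncard ≤ (principalNormals (α y)).ncard := by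
  choose G hG hGx using hext x
  refine Set.ncard_le_ncard_of_injOn (fun v => G v y)
    (fun v hv => mem_principalNormals_of_parallel hsymm hA hcomm hext hpar hiso (hG v)
      ((hGx v).symm ▸ hv) y)
    (fun v _ w _ h => ?_) (principalNormals_finite (hsymm y))
  simpa only [hGx] using parallel_eq_of_eq hext hpar (hG v) (hG w) h x

end Isoparametric

theorem stmt19_general {M : Type*}
    (Tang : M → Type*) [∀ x, NormedAddCommGroup (Tang x)]
    [∀ x, InnerProductSpace ℝ (Tang x)] [∀ x, FiniteDimensional ℝ (Tang x)]
    (Nor : M → Type*) [∀ x, NormedAddCommGroup (Nor x)]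
    [∀ x, InnerProductSpace ℝ (Nor x)]
    -- the second fundamental form at each point
    (α : ∀ x, Tang x →ₗ[ℝ] Tang x →ₗ[ℝ] Nor x)
    (hsymm : ∀ x X Y, α x X Y = α x Y X)
    -- the shape operators: ⟨A_ξ X, Y⟩ = ⟨α(X,Y), ξ⟩
    (A : ∀ x, Nor x → (Tang x →ₗ[ℝ] Tang x))
    (hA : ∀ x (ξ : Nor x) (X Y : Tang x), ⟪A x ξ X, Y⟫ = ⟪α x X Y, ξ⟫)
    -- flat normal bundle: the shape operators commute ...
    (hcomm : ∀ x (ξ ζ : Nor x), (A x ξ) ∘ₗ (A x ζ) = (A x ζ) ∘ₗ (A x ξ))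
    -- ... and, parallel normal fields being available, every normal vector extends
    -- to a parallel normal field, and parallel fields have constant inner products
    (Parallel : (∀ x, Nor x) → Prop)
    (hext : ∀ x (v : Nor x), ∃ ξ, Parallel ξ ∧ ξ x = v)
    (hpar : ∀ ξ ζ, Parallel ξ → Parallel ζ → ∀ x y, ⟪ξ x, ζ x⟫ = ⟪ξ y, ζ y⟫)
    -- isoparametric: the shape operator in any parallel normal direction has
    -- constant eigenvalues
    (hiso : ∀ ξ, Parallel ξ → ∀ x y,
      {c : ℝ | Module.End.HasEigenvalue (A x (ξ x)) c} =
      {c : ℝ | Module.End.HasEigenvalue (A y (ξ y)) c}) :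
    -- conclusion: f is proper, i.e. the number of principal normals is constant
    ∀ x y : M,
      {η : Nor x | ∃ X : Tang x, X ≠ 0 ∧ ∀ Y : Tang x, α x X Y = ⟪X, Y⟫ • η}.ncard =
      {η : Nor y | ∃ X : Tang y, X ≠ 0 ∧ ∀ Y : Tang y, α y X Y = ⟪X, Y⟫ • η}.ncard := by
  intro x y
  exact le_antisymm
    (ncard_principalNormals_le hsymm hA hcomm hext hpar hiso x y)
    (ncard_principalNormals_le hsymm hA hcomm hext hpar hiso y x)

/-- If f : Mⁿ → ℝᵐ is isoparametric (flat normal bundle and constant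
eigenvalues of the shape operators A_ξ in parallel normal directions ξ), then f is
proper: the number s(x) of distinct principal normals — the vectors η ∈ N_fM(x) for
which the space E(x,η) = {X : α(X,Y) = ⟨X,Y⟩η ∀Y} is nonzero — is constant on M.
(The tangent and normal spaces, second fundamental form, shape operators and the
predicate of being a parallel normal field are given as data; flatness of the normal
bundle means the shape operators commute and every normal vector extends to a parallel
normal field, and parallel normal fields have constant inner products.) -/
theorem stmt19 {M : Type*}
    (Tang : M → Type*) [∀ x, NormedAddCommGroup (Tang x)]
    [∀ x, InnerProductSpace ℝ (Tang x)] [∀ x, FiniteDimensional ℝ (Tang x)]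
    (Nor : M → Type*) [∀ x, NormedAddCommGroup (Nor x)]
    [∀ x, InnerProductSpace ℝ (Nor x)] [∀ x, FiniteDimensional ℝ (Nor x)]
    -- the second fundamental form at each point
    (α : ∀ x, Tang x →ₗ[ℝ] Tang x →ₗ[ℝ] Nor x)
    (hsymm : ∀ x X Y, α x X Y = α x Y X)
    -- the shape operators: ⟨A_ξ X, Y⟩ = ⟨α(X,Y), ξ⟩
    (A : ∀ x, Nor x → (Tang x →ₗ[ℝ] Tang x))
    (hA : ∀ x (ξ : Nor x) (X Y : Tang x), ⟪A x ξ X, Y⟫ = ⟪α x X Y, ξ⟫)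
    -- flat normal bundle: the shape operators commute ...
    (hcomm : ∀ x (ξ ζ : Nor x), (A x ξ) ∘ₗ (A x ζ) = (A x ζ) ∘ₗ (A x ξ))
    -- ... and, parallel normal fields being available, every normal vector extends
    -- to a parallel normal field, and parallel fields have constant inner products
    (Parallel : (∀ x, Nor x) → Prop)
    (hext : ∀ x (v : Nor x), ∃ ξ, Parallel ξ ∧ ξ x = v)
    (hpar : ∀ ξ ζ, Parallel ξ → Parallel ζ → ∀ x y, ⟪ξ x, ζ x⟫ = ⟪ξ y, ζ y⟫)
    -- isoparametric: the shape operator in any parallel normal direction has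
    -- constant eigenvalues
    (hiso : ∀ ξ, Parallel ξ → ∀ x y,
      {c : ℝ | Module.End.HasEigenvalue (A x (ξ x)) c} =
      {c : ℝ | Module.End.HasEigenvalue (A y (ξ y)) c}) :
    -- conclusion: f is proper, i.e. the number of principal normals is constant
    ∀ x y : M,
      {η : Nor x | ∃ X : Tang x, X ≠ 0 ∧ ∀ Y : Tang x, α x X Y = ⟪X, Y⟫ • η}.ncard =
      {η : Nor y | ∃ X : Tang y, X ≠ 0 ∧ ∀ Y : Tang y, α y X Y = ⟪X, Y⟫ • η}.ncard :=
  stmt19_general Tang Nor α hsymm A hA hcomm Parallel hext hpar hiso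
end
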